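/- arXiv:1403.3391 — 2 statements merged into one kernel-verified Lean document; each statement's English description precedes it below -/
import Mathlib

section
/- Let A be a finite set of candidates with |A| ≥ 3 and let N = {1,…,n} be a finite set of voters. Every Arrovian Social Welfare Function F : 𝒫^n → 𝒫 that satisfies Independence of Irrelevant Alternatives (IIA) and Weak Pareto (WP) is dictatorial, i.e., there exists a voter i ∈ N such that at every profile P and for all candidates a, b, if a P_i b then a is strictly socially preferred to b under F(P). (Arrow's Impossibility Theorem.) -/
/-- A voter preference: a strict linear (complete, transitive, antisymmetric) order on `A`. -/
abbrev Pref (A : Type*) := {r : A → A → Prop // IsStrictTotalOrder A r}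

/-- Two relations agree on the pair `{a, b}`. -/
def AgreeOnPair {A : Type*} (r r' : A → A → Prop) (a b : A) : Prop :=
  (r a b ↔ r' a b) ∧ (r b a ↔ r' b a)

/-- Independence of Irrelevant Alternatives for an ASWF. -/
def IIA {A : Type*} {n : ℕ} (F : (Fin n → Pref A) → Pref A) : Prop :=
  ∀ (P P' : Fin n → Pref A) (a b : A),
    (∀ i, AgreeOnPair (P i).1 (P' i).1 a b) → AgreeOnPair (F P).1 (F P').1 a b

/-- Weak Pareto: unanimous strict preference for `a` over `b` yields social
strict preference for `a` over `b`. -/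
def WeakPareto {A : Type*} {n : ℕ} (F : (Fin n → Pref A) → Pref A) : Prop :=
  ∀ (P : Fin n → Pref A) (a b : A), (∀ i, (P i).1 a b) → (F P).1 a b

/-- Dictatorship: some voter's strict preferences are always reproduced socially. -/
def Dictatorial {A : Type*} {n : ℕ} (F : (Fin n → Pref A) → Pref A) : Prop :=
  ∃ i : Fin n, ∀ (P : Fin n → Pref A) (a b : A), (P i).1 a b → (F P).1 a b

/-!
Call a coalition `G` of voters decisive for `a` over `b` if society ranks `a` above `b` whenever
all members of `G` do. By IIA, `G` is almost decisive for `a` over `b` (it wins when exactly its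
members prefer `a`) as soon as it wins at one such profile. Field expansion: if `G` is almost
decisive for `a` over `b`, let `G` rank `a b c` and everyone else put `b` on top, keeping each
voter's view of `a` versus `c`; society then ranks `a` above `b` above `c`, so by IIA `G` is
decisive for `a` over `c`. With the mirror argument this spreads to every pair.
Contraction: if `G₁ ∪ G₂` is decisive with `G₁, G₂` disjoint, the profile `G₁ : a b c`,
`G₂ : c a b`, others `b c a` makes society put `a` above `b`, hence either `a` above `c` (won by
`G₁` alone) or `c` above `b` (won by `G₂` alone). The electorate is decisive by Weak Pareto and the
empty coalition is not, so removing voters one at a time ends at a decisive singleton, the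
dictator.
-/
namespace Pref

variable {A : Type*} (r : Pref A) {a b c : A}

theorem irrefl (a : A) : ¬ r.1 a a :=
  have := r.2; _root_.irrefl a

theorem trans (hab : r.1 a b) (hbc : r.1 b c) : r.1 a c :=
  have := r.2; _root_.trans hab hbc

theorem asymm (hab : r.1 a b) : ¬ r.1 b a :=
  fun hba => r.irrefl a (r.trans hab hba)

theorem ne_of_rel (hab : r.1 a b) : a ≠ b := by
  rintro rfl
  exact r.irrefl a hab

theorem rel_swap_iff (hab : a ≠ b) : r.1 b a ↔ ¬ r.1 a b := by
  have := r.2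
  refine ⟨r.asymm, fun h => ?_⟩
  rcases trichotomous_of r.1 a b with h' | h' | h'
  exacts [absurd h' h, absurd h' hab, h']

def moveToTop (x : A) : Pref A :=
  ⟨fun u v => u = x ∧ v ≠ x ∨ u ≠ x ∧ v ≠ x ∧ r.1 u v,
    { irrefl := by grind [Pref.irrefl]
      trans := by grind [Pref.trans]
      trichotomous := by grind [Pref.rel_swap_iff] }⟩

@[simp]
theorem moveToTop_rel {x u v : A} :
    (r.moveToTop x).1 u v ↔ u = x ∧ v ≠ x ∨ u ≠ x ∧ v ≠ x ∧ r.1 u v :=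
  Iff.rfl

noncomputable def ofList (l : List A) : Pref A :=
  l.foldr (fun x r => r.moveToTop x) ⟨WellOrderingRel, inferInstance⟩

@[simp]
theorem ofList_cons (x : A) (l : List A) : ofList (x :: l) = (ofList l).moveToTop x :=
  rfl

end Pref

theorem exists_three_distinct_of_three_le_card {A : Type*} (hA : 3 ≤ ENat.card A) :
    ∃ a b c : A, a ≠ b ∧ a ≠ c ∧ b ≠ c := by
  have : Nonempty A := (ENat.one_le_card_iff_nonempty A).mp (le_trans (by norm_num) hA)
  obtain ⟨a⟩ := this
  obtain ⟨b, hba, -⟩ := ENat.exists_ne_ne_of_three_le hA a a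
  obtain ⟨c, hca, hcb⟩ := ENat.exists_ne_ne_of_three_le hA a b
  exact ⟨a, b, c, hba.symm, hca.symm, hcb.symm⟩

section Coalitions

variable {A : Type*} {n : ℕ} {F : (Fin n → Pref A) → Pref A} {G G₁ G₂ : Finset (Fin n)}
  {a b c : A}

theorem IIA.rel_iff (hIIA : IIA F) {P Q : Fin n → Pref A} (hab : a ≠ b)
    (h : ∀ i, (P i).1 a b ↔ (Q i).1 a b) : (F P).1 a b ↔ (F Q).1 a b :=
  (hIIA P Q a b fun i => ⟨h i, by rw [(P i).rel_swap_iff hab, (Q i).rel_swap_iff hab, h i]⟩).1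

variable (F) in
def AlmostDecisiveOver (G : Finset (Fin n)) (a b : A) : Prop :=
  ∀ P : Fin n → Pref A, (∀ i, (P i).1 a b ↔ i ∈ G) → (F P).1 a b

variable (F) in
def DecisiveOver (G : Finset (Fin n)) (a b : A) : Prop :=
  ∀ P : Fin n → Pref A, (∀ i ∈ G, (P i).1 a b) → (F P).1 a b

variable (F) in
def Decisive (G : Finset (Fin n)) : Prop :=
  ∀ a b : A, a ≠ b → DecisiveOver F G a b

theorem DecisiveOver.almostDecisiveOver (h : DecisiveOver F G a b) :
    AlmostDecisiveOver F G a b :=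
  fun P hP => h P fun i hi => (hP i).2 hi

theorem almostDecisiveOver_of_rel (hIIA : IIA F) (hab : a ≠ b) {P : Fin n → Pref A}
    (hP : ∀ i, (P i).1 a b ↔ i ∈ G) (hFP : (F P).1 a b) : AlmostDecisiveOver F G a b :=
  fun _ hQ => (hIIA.rel_iff hab fun i => (hP i).trans (hQ i).symm).1 hFP

theorem decisive_univ (hWP : WeakPareto F) : Decisive F (Finset.univ : Finset (Fin n)) :=
  fun a b _ P hP => hWP P a b fun i => hP i (Finset.mem_univ i)

theorem DecisiveOver.nonempty (hWP : WeakPareto F) (hab : a ≠ b) (h : DecisiveOver F G a b) :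
    G.Nonempty := by
  by_contra hG
  rw [Finset.not_nonempty_iff_eq_empty] at hG
  subst hG
  let P : Fin n → Pref A := fun _ => Pref.ofList [b, a]
  exact (F P).asymm (h P (by simp)) (hWP P b a fun _ => by simp [P, hab])

theorem AlmostDecisiveOver.decisiveOver_right (hIIA : IIA F) (hWP : WeakPareto F)
    (h : AlmostDecisiveOver F G a b) (hab : a ≠ b) (hac : a ≠ c) (hbc : b ≠ c) :
    DecisiveOver F G a c := by
  classical
  intro P hP
  let Q : Fin n → Pref A := fun i =>
    if i ∈ G then .ofList [a, b, c]
    else if (P i).1 a c then .ofList [b, a, c] else .ofList [b, c, a]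
  have hQ : ∀ i, ((Q i).1 a b ↔ i ∈ G) ∧ (Q i).1 b c ∧ ((Q i).1 a c ↔ (P i).1 a c) := by
    intro i
    by_cases hi : i ∈ G
    · simp [Q, hi, hP i hi, hab, hac, hbc, Ne.symm]
    · by_cases hPi : (P i).1 a c <;> simp [Q, hi, hPi, hab, hac, hbc, Ne.symm]
  have hFQ : (F Q).1 a c :=
    (F Q).trans (h Q fun i => (hQ i).1) (hWP Q b c fun i => (hQ i).2.1)
  exact (hIIA.rel_iff hac fun i => (hQ i).2.2).1 hFQ

theorem AlmostDecisiveOver.decisiveOver_left (hIIA : IIA F) (hWP : WeakPareto F)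
    (h : AlmostDecisiveOver F G a b) (hab : a ≠ b) (hac : a ≠ c) (hbc : b ≠ c) :
    DecisiveOver F G c b := by
  classical
  intro P hP
  let Q : Fin n → Pref A := fun i =>
    if i ∈ G then .ofList [c, a, b]
    else if (P i).1 c b then .ofList [c, b, a] else .ofList [b, c, a]
  have hQ : ∀ i, ((Q i).1 a b ↔ i ∈ G) ∧ (Q i).1 c a ∧ ((Q i).1 c b ↔ (P i).1 c b) := by
    intro i
    by_cases hi : i ∈ G
    · simp [Q, hi, hP i hi, hab, hac, hbc, Ne.symm]
    · by_cases hPi : (P i).1 c b <;> simp [Q, hi, hPi, hab, hac, hbc, Ne.symm]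
  have hFQ : (F Q).1 c b :=
    (F Q).trans (hWP Q c a fun i => (hQ i).2.1) (h Q fun i => (hQ i).1)
  exact (hIIA.rel_iff hbc.symm fun i => (hQ i).2.2).1 hFQ

theorem AlmostDecisiveOver.replace_right (hIIA : IIA F) (hWP : WeakPareto F)
    (h : AlmostDecisiveOver F G a b) (hab : a ≠ b) (hac : a ≠ c) :
    AlmostDecisiveOver F G a c := by
  rcases eq_or_ne b c with rfl | hbc
  · exact h
  · exact (h.decisiveOver_right hIIA hWP hab hac hbc).almostDecisiveOver

theorem AlmostDecisiveOver.replace_left (hIIA : IIA F) (hWP : WeakPareto F)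
    (h : AlmostDecisiveOver F G a b) (hab : a ≠ b) (hcb : c ≠ b) :
    AlmostDecisiveOver F G c b := by
  rcases eq_or_ne a c with rfl | hac
  · exact h
  · exact (h.decisiveOver_left hIIA hWP hab hac hcb.symm).almostDecisiveOver

theorem AlmostDecisiveOver.decisive (hA : 3 ≤ ENat.card A) (hIIA : IIA F) (hWP : WeakPareto F)
    (h : AlmostDecisiveOver F G a b) (hab : a ≠ b) : Decisive F G := by
  have hall : ∀ x y : A, x ≠ y → AlmostDecisiveOver F G x y := by
    intro x y hxy
    rcases eq_or_ne x b with rfl | hxb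
    · obtain ⟨c, hca, hcb⟩ := ENat.exists_ne_ne_of_three_le hA a x
      have hac : AlmostDecisiveOver F G a c := h.replace_right hIIA hWP hab hca.symm
      exact (hac.replace_left hIIA hWP hca.symm hcb.symm).replace_right hIIA hWP hcb.symm hxy
    · exact (h.replace_left hIIA hWP hab hxb).replace_right hIIA hWP hxb hxy
  intro x y hxy
  obtain ⟨z, hzx, hzy⟩ := ENat.exists_ne_ne_of_three_le hA x y
  exact (hall x z hzx.symm).decisiveOver_right hIIA hWP hzx.symm hxy hzy

theorem almostDecisiveOver_or_of_decisiveOver_union (hIIA : IIA F) (hdisj : Disjoint G₁ G₂)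
    (h : DecisiveOver F (G₁ ∪ G₂) a b) (hab : a ≠ b) (hac : a ≠ c) (hbc : b ≠ c) :
    AlmostDecisiveOver F G₁ a c ∨ AlmostDecisiveOver F G₂ c b := by
  classical
  let P : Fin n → Pref A := fun i =>
    if i ∈ G₁ then .ofList [a, b, c] else if i ∈ G₂ then .ofList [c, a, b] else .ofList [b, c, a]
  have hP : ∀ i, ((P i).1 a b ↔ i ∈ G₁ ∪ G₂) ∧ ((P i).1 a c ↔ i ∈ G₁) ∧
      ((P i).1 c b ↔ i ∈ G₂) := by
    intro i
    by_cases hi₁ : i ∈ G₁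
    · simp [P, hi₁, Finset.disjoint_left.mp hdisj hi₁, hab, hac, hbc, Ne.symm]
    · by_cases hi₂ : i ∈ G₂ <;> simp [P, hi₁, hi₂, hab, hac, hbc, Ne.symm]
  have hFab : (F P).1 a b := h P fun i hi => (hP i).1.2 hi
  by_cases hFac : (F P).1 a c
  · exact .inl (almostDecisiveOver_of_rel hIIA hac (fun i => (hP i).2.1) hFac)
  · have hFcb : (F P).1 c b := (F P).trans (((F P).rel_swap_iff hac).2 hFac) hFab
    exact .inr (almostDecisiveOver_of_rel hIIA hbc.symm (fun i => (hP i).2.2) hFcb)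

theorem decisive_or_of_decisive_union (hA : 3 ≤ ENat.card A) (hIIA : IIA F)
    (hWP : WeakPareto F) (hdisj : Disjoint G₁ G₂) (h : Decisive F (G₁ ∪ G₂)) :
    Decisive F G₁ ∨ Decisive F G₂ := by
  obtain ⟨a, b, c, hab, hac, hbc⟩ := exists_three_distinct_of_three_le_card hA
  rcases almostDecisiveOver_or_of_decisiveOver_union hIIA hdisj (h a b hab) hab hac hbc
    with h₁ | h₂
  · exact .inl (h₁.decisive hA hIIA hWP hac)
  · exact .inr (h₂.decisive hA hIIA hWP hbc.symm)

theorem Decisive.exists_singleton (hA : 3 ≤ ENat.card A) (hIIA : IIA F) (hWP : WeakPareto F)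
    (h : Decisive F G) : ∃ i, Decisive F {i} := by
  obtain ⟨a, b, -, hab, -, -⟩ := exists_three_distinct_of_three_le_card hA
  induction G using Finset.strongInduction with
  | H G ih =>
    obtain ⟨i, hi⟩ := (h a b hab).nonempty hWP hab
    rw [← Finset.insert_erase hi, Finset.insert_eq] at h
    rcases decisive_or_of_decisive_union hA hIIA hWP (by simp) h with hi | hrest
    · exact ⟨i, hi⟩
    · exact ih _ (Finset.erase_ssubset hi) hrest

end Coalitions

/-- **Arrow's Impossibility Theorem.** -/
theorem arrow_impossibility {A : Type*} [Fintype A] (hA : 3 ≤ Fintype.card A)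
    {n : ℕ} (F : (Fin n → Pref A) → Pref A)
    (hIIA : IIA F) (hWP : WeakPareto F) : Dictatorial F := by
  have hA' : 3 ≤ ENat.card A := by simpa [ENat.card_eq_coe_fintype_card] using hA
  obtain ⟨i, hi⟩ := (decisive_univ hWP).exists_singleton hA' hIIA hWP
  exact ⟨i, fun P a b h => hi a b ((P i).ne_of_rel h) P (by simpa using h)⟩
end

section
/- Let X be a finite set with |X| ≥ 6, linearly ordered by a strict order >̇, and let 𝒳 be the collection of all nonempty subsets of X. There does not exist a weak order ≿ on 𝒳 satisfying both the Gärdenfors Principle (GF) and Independence (IND) with respect to >̇. (Kannai–Peleg Theorem.) -/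
/-- The collection of nonempty subsets of `X`. -/
abbrev NESet (X : Type*) := {s : Finset X // s.Nonempty}

/-- The strict (asymmetric) part of a relation. -/
def StrictPart {Y : Type*} (R : Y → Y → Prop) (a b : Y) : Prop := R a b ∧ ¬ R b a

/-- Insert an element into a nonempty set (staying nonempty). -/
def NESet.addElem {X : Type*} [DecidableEq X] (x : X) (A : NESet X) : NESet X :=
  ⟨Insert.insert x A.1, Finset.insert_nonempty x A.1⟩

/-- There is a strictly monotone 6-tuple in a linearly ordered type of cardinality ≥ 6. -/
lemma exists_strictMono_six (X : Type*) [Fintype X] [LinearOrder X]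
    (h : 6 ≤ Fintype.card X) : ∃ x : Fin 6 → X, StrictMono x := by
  obtain ⟨t, -, ht⟩ := Finset.exists_subset_card_eq (s := (Finset.univ : Finset X))
    (by simpa using h)
  exact ⟨fun i => t.orderIsoOfFin ht i, fun i j hij => by
    exact_mod_cast (t.orderIsoOfFin ht).strictMono hij⟩

/-- **Kannai–Peleg Theorem**: for `|X| ≥ 6`, no weak order on the nonempty subsets of
`X` satisfies both the Gärdenfors principle and Independence. -/
theorem kannai_peleg {X : Type*} [Fintype X] [LinearOrder X]
    (hX : 6 ≤ Fintype.card X)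
    (R : NESet X → NESet X → Prop)
    (hrefl : Reflexive R) (htrans : Transitive R) (htotal : Total R)
    (hGF₁ : ∀ (A : NESet X) (x : X), (∀ a ∈ A.1, a < x) →
      StrictPart R (NESet.addElem x A) A)
    (hGF₂ : ∀ (A : NESet X) (x : X), (∀ a ∈ A.1, x < a) →
      StrictPart R A (NESet.addElem x A))
    (hIND : ∀ (A B : NESet X) (x : X), x ∉ A.1 → x ∉ B.1 →
      StrictPart R A B → R (NESet.addElem x A) (NESet.addElem x B)) :
    False := by
  classical
  obtain ⟨x, hx⟩ := exists_strictMono_six X hX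
  have hlt : ∀ {i j : Fin 6}, i < j → x i < x j := fun h => hx h
  have hne : ∀ {i j : Fin 6}, i ≠ j → x i ≠ x j := fun h => hx.injective.ne h
  -- combinations of transitivity with the strict part
  have PgeP : ∀ {A B C : NESet X}, StrictPart R A B → R B C → StrictPart R A C := by
    rintro A B C ⟨h1, h2⟩ h3
    exact ⟨htrans h1 h3, fun h4 => h2 (htrans h3 h4)⟩
  have gePP : ∀ {A B C : NESet X}, R A B → StrictPart R B C → StrictPart R A C := by
    rintro A B C h1 ⟨h2, h3⟩
    exact ⟨htrans h1 h2, fun h4 => h3 (htrans h4 h1)⟩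
  -- restatements of the axioms convenient for explicit finsets
  have GF1' : ∀ (s t : Finset X) (hs : s.Nonempty) (ht : t.Nonempty) (y : X),
      (∀ a ∈ s, a < y) → insert y s = t →
      StrictPart R ⟨t, ht⟩ ⟨s, hs⟩ := by
    intro s t hs ht y h1 h2
    have h3 := hGF₁ ⟨s, hs⟩ y h1
    have h4 : NESet.addElem y (⟨s, hs⟩ : NESet X) = (⟨t, ht⟩ : NESet X) := Subtype.ext h2
    rwa [h4] at h3
  have GF2' : ∀ (s t : Finset X) (hs : s.Nonempty) (ht : t.Nonempty) (y : X),
      (∀ a ∈ s, y < a) → insert y s = t →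
      StrictPart R ⟨s, hs⟩ ⟨t, ht⟩ := by
    intro s t hs ht y h1 h2
    have h3 := hGF₂ ⟨s, hs⟩ y h1
    have h4 : NESet.addElem y (⟨s, hs⟩ : NESet X) = (⟨t, ht⟩ : NESet X) := Subtype.ext h2
    rwa [h4] at h3
  have IND' : ∀ (s u : Finset X) (hs : s.Nonempty) (hu : u.Nonempty)
      (t v : Finset X) (ht : t.Nonempty) (hv : v.Nonempty) (y : X),
      y ∉ s → y ∉ u → insert y s = t → insert y u = v →
      StrictPart R ⟨s, hs⟩ ⟨u, hu⟩ → R ⟨t, ht⟩ ⟨v, hv⟩ := by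
    intro s u hs hu t v ht hv y h1 h2 h3 h4 h5
    have h6 := hIND ⟨s, hs⟩ ⟨u, hu⟩ y h1 h2 h5
    have e1 : NESet.addElem y (⟨s, hs⟩ : NESet X) = (⟨t, ht⟩ : NESet X) := Subtype.ext h3
    have e2 : NESet.addElem y (⟨u, hu⟩ : NESet X) = (⟨v, hv⟩ : NESet X) := Subtype.ext h4
    rwa [e1, e2] at h6
  -- the case split: {x 3} versus {x 2, x 4}
  by_cases hc : R ⟨{x 3}, by simp⟩ ⟨{x 2, x 4}, by simp⟩
  · -- Case A : {x 3} ≿ {x 2, x 4}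
    have f1 : StrictPart R (⟨{x 0, x 3, x 4}, by simp⟩ : NESet X) ⟨{x 0, x 3}, by simp⟩ :=
      GF1' _ _ _ _ (x 4)
        (by
          intro a ha
          simp only [Finset.mem_insert, Finset.mem_singleton] at ha
          rcases ha with rfl | rfl
          exacts [hlt (by decide), hlt (by decide)])
        (by ext a; simp <;> tauto)
    have f2 : StrictPart R (⟨{x 2, x 4}, by simp⟩ : NESet X) ⟨{x 1, x 2, x 4}, by simp⟩ :=
      GF2' _ _ _ _ (x 1)
        (by
          intro a ha
          simp only [Finset.mem_insert, Finset.mem_singleton] at ha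
          rcases ha with rfl | rfl
          exacts [hlt (by decide), hlt (by decide)])
        (by ext a; simp <;> tauto)
    have f3 : StrictPart R (⟨{x 3}, by simp⟩ : NESet X) ⟨{x 1, x 2, x 4}, by simp⟩ :=
      gePP hc f2
    have f4 : R (⟨{x 0, x 3}, by simp⟩ : NESet X) ⟨{x 0, x 1, x 2, x 4}, by simp⟩ :=
      IND' _ _ _ _ _ _ _ _ (x 0)
        (by simp only [Finset.mem_singleton]; exact hne (by decide))
        (by
          simp only [Finset.mem_insert, Finset.mem_singleton, not_or]
          exact ⟨hne (by decide), hne (by decide), hne (by decide)⟩)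
        (by ext a; simp <;> tauto) (by ext a; simp <;> tauto) f3
    have f5 : StrictPart R (⟨{x 0, x 3, x 4}, by simp⟩ : NESet X)
        ⟨{x 0, x 1, x 2, x 4}, by simp⟩ := PgeP f1 f4
    have f6 : StrictPart R (⟨{x 0, x 1, x 2}, by simp⟩ : NESet X) ⟨{x 0, x 1}, by simp⟩ :=
      GF1' _ _ _ _ (x 2)
        (by
          intro a ha
          simp only [Finset.mem_insert, Finset.mem_singleton] at ha
          rcases ha with rfl | rfl
          exacts [hlt (by decide), hlt (by decide)])
        (by ext a; simp <;> tauto)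
    have f7 : R (⟨{x 0, x 1, x 2, x 4}, by simp⟩ : NESet X) ⟨{x 0, x 1, x 4}, by simp⟩ :=
      IND' _ _ _ _ _ _ _ _ (x 4)
        (by
          simp only [Finset.mem_insert, Finset.mem_singleton, not_or]
          exact ⟨hne (by decide), hne (by decide), hne (by decide)⟩)
        (by
          simp only [Finset.mem_insert, Finset.mem_singleton, not_or]
          exact ⟨hne (by decide), hne (by decide)⟩)
        (by ext a; simp <;> tauto) (by ext a; simp <;> tauto) f6
    have f8 : StrictPart R (⟨{x 0, x 1}, by simp⟩ : NESet X) ⟨{x 0}, by simp⟩ :=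
      GF1' _ _ _ _ (x 1)
        (by
          intro a ha
          simp only [Finset.mem_singleton] at ha
          rcases ha with rfl
          exact hlt (by decide))
        (by ext a; simp <;> tauto)
    have f9 : R (⟨{x 0, x 1, x 4}, by simp⟩ : NESet X) ⟨{x 0, x 4}, by simp⟩ :=
      IND' _ _ _ _ _ _ _ _ (x 4)
        (by
          simp only [Finset.mem_insert, Finset.mem_singleton, not_or]
          exact ⟨hne (by decide), hne (by decide)⟩)
        (by simp only [Finset.mem_singleton]; exact hne (by decide))
        (by ext a; simp <;> tauto) (by ext a; simp <;> tauto) f8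
    have f10 : StrictPart R (⟨{x 4}, by simp⟩ : NESet X) ⟨{x 3, x 4}, by simp⟩ :=
      GF2' _ _ _ _ (x 3)
        (by
          intro a ha
          simp only [Finset.mem_singleton] at ha
          rcases ha with rfl
          exact hlt (by decide))
        (by ext a; simp <;> tauto)
    have f11 : R (⟨{x 0, x 4}, by simp⟩ : NESet X) ⟨{x 0, x 3, x 4}, by simp⟩ :=
      IND' _ _ _ _ _ _ _ _ (x 0)
        (by simp only [Finset.mem_singleton]; exact hne (by decide))
        (by
          simp only [Finset.mem_insert, Finset.mem_singleton, not_or]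
          exact ⟨hne (by decide), hne (by decide)⟩)
        (by ext a; simp <;> tauto) (by ext a; simp <;> tauto) f10
    exact f5.2 (htrans f7 (htrans f9 f11))
  · -- Case B : {x 2, x 4} ≻ {x 3}
    have hB : StrictPart R (⟨{x 2, x 4}, by simp⟩ : NESet X) ⟨{x 3}, by simp⟩ :=
      ⟨(htotal _ _).resolve_left hc, hc⟩
    have g1 : R (⟨{x 2, x 4, x 5}, by simp⟩ : NESet X) ⟨{x 3, x 5}, by simp⟩ :=
      IND' _ _ _ _ _ _ _ _ (x 5)
        (by
          simp only [Finset.mem_insert, Finset.mem_singleton, not_or]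
          exact ⟨hne (by decide), hne (by decide)⟩)
        (by simp only [Finset.mem_singleton]; exact hne (by decide))
        (by ext a; simp <;> tauto) (by ext a; simp <;> tauto) hB
    have g2 : StrictPart R (⟨{x 3, x 5}, by simp⟩ : NESet X) ⟨{x 2, x 3, x 5}, by simp⟩ :=
      GF2' _ _ _ _ (x 2)
        (by
          intro a ha
          simp only [Finset.mem_insert, Finset.mem_singleton] at ha
          rcases ha with rfl | rfl
          exacts [hlt (by decide), hlt (by decide)])
        (by ext a; simp <;> tauto)
    have g3 : StrictPart R (⟨{x 2, x 4, x 5}, by simp⟩ : NESet X)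
        ⟨{x 2, x 3, x 5}, by simp⟩ := gePP g1 g2
    have g4 : StrictPart R (⟨{x 2, x 3}, by simp⟩ : NESet X) ⟨{x 2}, by simp⟩ :=
      GF1' _ _ _ _ (x 3)
        (by
          intro a ha
          simp only [Finset.mem_singleton] at ha
          rcases ha with rfl
          exact hlt (by decide))
        (by ext a; simp <;> tauto)
    have g5 : R (⟨{x 2, x 3, x 5}, by simp⟩ : NESet X) ⟨{x 2, x 5}, by simp⟩ :=
      IND' _ _ _ _ _ _ _ _ (x 5)
        (by
          simp only [Finset.mem_insert, Finset.mem_singleton, not_or]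
          exact ⟨hne (by decide), hne (by decide)⟩)
        (by simp only [Finset.mem_singleton]; exact hne (by decide))
        (by ext a; simp <;> tauto) (by ext a; simp <;> tauto) g4
    have g6 : StrictPart R (⟨{x 5}, by simp⟩ : NESet X) ⟨{x 4, x 5}, by simp⟩ :=
      GF2' _ _ _ _ (x 4)
        (by
          intro a ha
          simp only [Finset.mem_singleton] at ha
          rcases ha with rfl
          exact hlt (by decide))
        (by ext a; simp <;> tauto)
    have g7 : R (⟨{x 2, x 5}, by simp⟩ : NESet X) ⟨{x 2, x 4, x 5}, by simp⟩ :=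
      IND' _ _ _ _ _ _ _ _ (x 2)
        (by simp only [Finset.mem_singleton]; exact hne (by decide))
        (by
          simp only [Finset.mem_insert, Finset.mem_singleton, not_or]
          exact ⟨hne (by decide), hne (by decide)⟩)
        (by ext a; simp <;> tauto) (by ext a; simp <;> tauto) g6
    exact g3.2 (htrans g5 g7)
end
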